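/- Let Σ_k and Σ_m be real n×n positive semidefinite matrices with range(Σ_k) = range(Σ_m), let μ ∈ range(Σ_m), and let Φ be a real ℓ×n matrix with rank(Σ_m^{1/2}·Φᵀ·Φ·Σ_m^{1/2}) = rank(Σ_m). For σ² > 0 define W_k(σ²) := Σ_k·Φᵀ·(σ²·I_ℓ + Φ·Σ_k·Φᵀ)⁻¹, W_m(σ²) := Σ_m·Φᵀ·(σ²·I_ℓ + Φ·Σ_m·Φᵀ)⁻¹, Σ_y(σ²) := σ²·I_ℓ + Φ·Σ_k·Φᵀ, M := μ·μᵀ, and the mismatched mean-squared error MSE_mis(σ²) := tr(Σ_k) − 2·tr(W_k(σ²)·Σ_y(σ²)·W_m(σ²)ᵀ) + tr(W_m(σ²)·Σ_y(σ²)·W_m(σ²)ᵀ) + tr(M) − 2·tr(M·Φᵀ·W_m(σ²)ᵀ) + tr(W_m(σ²)·Φ·M·Φᵀ·W_m(σ²)ᵀ). Then lim_{σ²→0⁺} MSE_mis(σ²) = 0. -/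

import Mathlib

/-!
Write `σ` for the noise variance `σ²`, `S = Σ_m^{1/2}`, `H = Φ Σ_m Φᵀ` and `R = 1 - W_m Φ`.
Since `W_k Σ_y = Σ_k Φᵀ`, the mismatched error is the bias-variance sum
`tr (R Σ_k Rᵀ) + tr (R M Rᵀ) + σ tr (W_m W_mᵀ)`. The range hypotheses give `Σ_k = S K S` and
`M = S K' S`, and the rank hypothesis says that the rows of `Φ S` span those of `S`, i.e.
`S = Yᵀ Φ S`. Since moreover `Φ S` factors through `H`, one gets
`R S = Yᵀ (σ (σ + H)⁻¹ H) Z` and `σ W_m W_mᵀ = Yᵀ (σ ((σ + H)⁻¹ H) ^ 2) Y`, and in an eigenbasis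
of `H` the matrix `σ ((σ + H)⁻¹ H) ^ k` is diagonal with entries `σ (d / (σ + d)) ^ k ∈ [0, σ]`.
-/

open Matrix Filter Topology

open scoped ComplexOrder in
/-- The positive semidefinite square root of a positive semidefinite matrix, as defined in
Mathlib (December 2024); restored here since Mathlib has removed `Matrix.PosSemidef.sqrt`. -/
noncomputable def Matrix.PosSemidef.sqrt {n 𝕜 : Type*} [Fintype n] [RCLike 𝕜] [DecidableEq n]
    {A : Matrix n n 𝕜} (hA : A.PosSemidef) : Matrix n n 𝕜 :=
  hA.1.eigenvectorUnitary.1 * diagonal ((↑) ∘ (√·) ∘ hA.1.eigenvalues) *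
  (star hA.1.eigenvectorUnitary : Matrix n n 𝕜)

theorem tendsto_mul_div_add_pow {d : ℝ} (hd : 0 ≤ d) (k : ℕ) :
    Tendsto (fun σ : ℝ => σ * (d / (σ + d)) ^ k) (𝓝[>] 0) (𝓝 0) := by
  refine tendsto_of_tendsto_of_tendsto_of_le_of_le' tendsto_const_nhds
    (tendsto_id.mono_left nhdsWithin_le_nhds) ?_ ?_
  all_goals filter_upwards [self_mem_nhdsWithin] with σ (hσ : 0 < σ)
  · positivity
  · have : d / (σ + d) ≤ 1 := div_le_one_of_le₀ (by linarith) (by positivity)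
    exact mul_le_of_le_one_right hσ.le (pow_le_one₀ (by positivity) this)

namespace Matrix

variable {m n l : Type*}

theorem range_mulVecLin_mul_le {R : Type*} [CommSemiring R] [Fintype n] [Fintype l]
    (A : Matrix m n R) (B : Matrix n l R) :
    LinearMap.range (A * B).mulVecLin ≤ LinearMap.range A.mulVecLin := by
  rw [mulVecLin_mul]
  exact LinearMap.range_comp_le_range _ _

theorem range_mulVecLin_self_mul_transpose [Fintype m] [Fintype n] (A : Matrix m n ℝ) :
    LinearMap.range (A * Aᵀ).mulVecLin = LinearMap.range A.mulVecLin :=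
  Submodule.eq_of_le_of_finrank_eq (range_mulVecLin_mul_le A Aᵀ) (rank_self_mul_conjTranspose A)

theorem exists_mul_eq_of_range_le {R : Type*} [CommSemiring R] [Fintype n] [Fintype l]
    [DecidableEq l] {A : Matrix m n R} {B : Matrix m l R}
    (h : LinearMap.range B.mulVecLin ≤ LinearMap.range A.mulVecLin) :
    ∃ X : Matrix n l R, A * X = B := by
  choose x hx using fun j => h ⟨Pi.single j 1, rfl⟩
  refine ⟨Matrix.of fun i j => x j i, ?_⟩
  ext i j
  rw [mul_apply]
  simpa [mulVec, dotProduct, Pi.single_apply] using congrFun (hx j) i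

theorem mul_vecMulVec_mul_transpose {R : Type*} [CommSemiring R] [Fintype n] {p : Type*}
    (A : Matrix m n R) (B : Matrix p n R) (x y : n → R) :
    A * vecMulVec x y * Bᵀ = vecMulVec (A *ᵥ x) (B *ᵥ y) := by
  rw [mul_vecMulVec, vecMulVec_mul, vecMul_transpose]

theorem exists_transpose_mul_mul_eq_of_rank_eq [Fintype n] [Fintype l] [DecidableEq n]
    {S : Matrix n n ℝ} {Φ : Matrix l n ℝ} (hS : Sᵀ = S) (h : (S * Φᵀ * Φ * S).rank = S.rank) :
    ∃ Y : Matrix l n ℝ, Yᵀ * (Φ * S) = S := by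
  have hSΦ : S * Φᵀ * (S * Φᵀ)ᵀ = S * Φᵀ * Φ * S := by
    rw [transpose_mul, transpose_transpose, hS]
    simp only [Matrix.mul_assoc]
  have hrange : LinearMap.range (S * Φᵀ).mulVecLin = LinearMap.range S.mulVecLin :=
    Submodule.eq_of_le_of_finrank_eq (range_mulVecLin_mul_le S Φᵀ)
      ((rank_self_mul_conjTranspose (S * Φᵀ)).symm.trans (hSΦ ▸ h))
  obtain ⟨X, hX⟩ := exists_mul_eq_of_range_le hrange.ge
  refine ⟨X, ?_⟩
  rw [← hS, ← transpose_transpose Φ, ← transpose_mul, ← transpose_mul, hX, hS]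

theorem PosSemidef.transpose_eq {A : Matrix n n ℝ} (hA : A.PosSemidef) : Aᵀ = A := hA.1

theorem PosSemidef.posDef_smul_one_add [DecidableEq n] {G : Matrix n n ℝ} (hG : G.PosSemidef)
    {σ : ℝ} (hσ : 0 < σ) : (σ • 1 + G).PosDef :=
  (PosDef.one.smul hσ).add_posSemidef hG

theorem mul_inv_smul_one_add {R : Type*} [CommRing R] [Fintype l] [DecidableEq l]
    {H : Matrix l l R} {σ : R} (h : IsUnit (σ • 1 + H).det) :
    H * (σ • 1 + H)⁻¹ = 1 - σ • (σ • 1 + H)⁻¹ :=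
  calc H * (σ • 1 + H)⁻¹ = (σ • 1 + H) * (σ • 1 + H)⁻¹ - σ • (σ • 1 + H)⁻¹ := by
        rw [Matrix.add_mul, Matrix.smul_mul, Matrix.one_mul, add_sub_cancel_left]
    _ = 1 - σ • (σ • 1 + H)⁻¹ := by rw [mul_nonsing_inv _ h]

theorem inv_smul_one_add_mul {R : Type*} [CommRing R] [Fintype l] [DecidableEq l]
    {H : Matrix l l R} {σ : R} (h : IsUnit (σ • 1 + H).det) :
    (σ • 1 + H)⁻¹ * H = 1 - σ • (σ • 1 + H)⁻¹ :=
  calc (σ • 1 + H)⁻¹ * H = (σ • 1 + H)⁻¹ * (σ • 1 + H) - σ • (σ • 1 + H)⁻¹ := by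
        rw [Matrix.mul_add, Matrix.mul_smul, Matrix.mul_one, add_sub_cancel_left]
    _ = 1 - σ • (σ • 1 + H)⁻¹ := by rw [nonsing_inv_mul _ h]

section Sqrt

open scoped MatrixOrder

variable [Fintype n] [DecidableEq n] {A : Matrix n n ℝ} (hA : A.PosSemidef)
include hA

theorem PosSemidef.sqrt_eq_cfcSqrt : hA.sqrt = CFC.sqrt A := by
  rw [CFC.sqrt_eq_cfc, cfc_nnreal_eq_real _ A, hA.1.cfc_eq]
  simp [IsHermitian.cfc, PosSemidef.sqrt, Function.comp_def, hA.eigenvalues_nonneg]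

theorem PosSemidef.sqrt_mul_self : hA.sqrt * hA.sqrt = A := by
  rw [hA.sqrt_eq_cfcSqrt]
  exact CFC.sqrt_mul_sqrt_self A hA.nonneg

theorem PosSemidef.posSemidef_sqrt : hA.sqrt.PosSemidef := by
  rw [hA.sqrt_eq_cfcSqrt]
  exact (CFC.sqrt_nonneg A).posSemidef

theorem PosSemidef.range_mulVecLin_sqrt :
    LinearMap.range hA.sqrt.mulVecLin = LinearMap.range A.mulVecLin := by
  have h := range_mulVecLin_self_mul_transpose hA.sqrt
  rwa [hA.posSemidef_sqrt.transpose_eq, hA.sqrt_mul_self, eq_comm] at h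

end Sqrt

theorem PosSemidef.exists_eq_mul_mul_of_range_le [Fintype n] [DecidableEq n]
    {Q S : Matrix n n ℝ} (hQ : Q.PosSemidef) (hS : Sᵀ = S)
    (h : LinearMap.range Q.mulVecLin ≤ LinearMap.range S.mulVecLin) :
    ∃ K, Q = S * K * S := by
  obtain ⟨L, hL⟩ := exists_mul_eq_of_range_le (hQ.range_mulVecLin_sqrt.trans_le h)
  refine ⟨L * Lᵀ, ?_⟩
  calc Q = hQ.sqrt * hQ.sqrtᵀ := by rw [hQ.posSemidef_sqrt.transpose_eq, hQ.sqrt_mul_self]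
    _ = S * (L * Lᵀ) * S := by
      rw [← hL, transpose_mul, hS]
      simp only [Matrix.mul_assoc]

theorem PosSemidef.tendsto_smul_inv_smul_one_add_mul_pow [Fintype n] [DecidableEq n]
    {G : Matrix n n ℝ} (hG : G.PosSemidef) (k : ℕ) :
    Tendsto (fun σ : ℝ => σ • ((σ • 1 + G)⁻¹ * G) ^ k) (𝓝[>] 0) (𝓝 0) := by
  set φ := Unitary.conjStarAlgAut ℝ _ hG.1.eigenvectorUnitary
  set d := hG.1.eigenvalues
  have hGd : G = φ (diagonal d) := by
    conv_lhs => rw [hG.1.spectral_theorem]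
    simp [d, φ]
  have hdiag : ∀ σ : ℝ, 0 < σ →
      σ • ((σ • 1 + G)⁻¹ * G) ^ k = φ (diagonal fun i => σ * (d i / (σ + d i)) ^ k) := by
    intro σ hσ
    have hpos i : σ + d i ≠ 0 := (add_pos_of_pos_of_nonneg hσ (hG.eigenvalues_nonneg i)).ne'
    have hres : (σ • 1 + G) * φ (diagonal fun i => d i / (σ + d i)) = G := by
      rw [hGd, ← map_one φ, ← map_smul, ← map_add, ← map_mul, smul_one_eq_diagonal,
        diagonal_add, diagonal_mul_diagonal]
      congr 2
      funext i
      field_simp [hpos i]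
    have hT : (σ • 1 + G)⁻¹ * G = φ (diagonal fun i => d i / (σ + d i)) :=
      calc (σ • 1 + G)⁻¹ * G
          = (σ • 1 + G)⁻¹ * ((σ • 1 + G) * φ (diagonal fun i => d i / (σ + d i))) := by
            rw [hres]
        _ = _ := nonsing_inv_mul_cancel_left _ _
            (hG.posDef_smul_one_add hσ).det_pos.ne'.isUnit
    rw [hT, ← map_pow, diagonal_pow, ← map_smul, ← diagonal_smul]
    rfl
  have hlim : Tendsto (fun σ : ℝ => fun i => σ * (d i / (σ + d i)) ^ k) (𝓝[>] 0) (𝓝 0) :=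
    tendsto_pi_nhds.mpr fun i => tendsto_mul_div_add_pow (hG.eigenvalues_nonneg i) k
  have hcont : Continuous fun v : n → ℝ => φ (diagonal v) := by
    simp only [φ, Unitary.conjStarAlgAut_apply]
    fun_prop
  have := (hcont.tendsto 0).comp hlim
  rw [Pi.zero_def, diagonal_zero, map_zero] at this
  refine this.congr' ?_
  filter_upwards [self_mem_nhdsWithin] with σ hσ
  exact (hdiag σ hσ).symm

theorem tendsto_const_mul_mul_const [Fintype l] {p q α : Type*} [Fintype p] {F : Filter α}
    {f : α → Matrix l l ℝ} (hf : Tendsto f F (𝓝 0)) (A : Matrix p l ℝ) (B : Matrix l q ℝ) :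
    Tendsto (fun x => A * f x * B) F (𝓝 0) := by
  have hc : Continuous fun X : Matrix l l ℝ => A * X * B :=
    (continuous_const.matrix_mul continuous_id).matrix_mul continuous_const
  have h := (hc.tendsto 0).comp hf
  rwa [Matrix.mul_zero, Matrix.zero_mul] at h

theorem tendsto_trace_mul_mul_transpose [Fintype n] {α : Type*} {F : Filter α}
    {A : α → Matrix n n ℝ} (hA : Tendsto A F (𝓝 0)) (K : Matrix n n ℝ) :
    Tendsto (fun x => (A x * K * (A x)ᵀ).trace) F (𝓝 0) := by
  have hc : Continuous fun X : Matrix n n ℝ => (X * K * Xᵀ).trace :=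
    ((continuous_id.matrix_mul continuous_const).matrix_mul
      continuous_id.matrix_transpose).matrix_trace
  have h := (hc.tendsto 0).comp hA
  rwa [Matrix.zero_mul, Matrix.zero_mul, trace_zero] at h

theorem trace_one_sub_mul_mul_transpose {R : Type*} [CommRing R] [Fintype n] [Fintype l]
    [DecidableEq n] {Q : Matrix n n R} (hQ : Qᵀ = Q) (W : Matrix n l R) (Φ : Matrix l n R) :
    ((1 - W * Φ) * Q * (1 - W * Φ)ᵀ).trace
      = Q.trace - 2 * (Q * Φᵀ * Wᵀ).trace + (W * Φ * Q * Φᵀ * Wᵀ).trace := by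
  have h : (W * (Φ * Q)).trace = (Q * (Φᵀ * Wᵀ)).trace := by
    rw [← trace_transpose, transpose_mul, transpose_mul, hQ, Matrix.mul_assoc]
  simp only [transpose_sub, transpose_one, transpose_mul, sub_mul, mul_sub, one_mul, mul_one,
    trace_sub, Matrix.mul_assoc, h]
  ring

end Matrix

section WienerFilter

variable {n l : Type*} [Fintype n] [Fintype l] [DecidableEq l]

noncomputable def wienerFilter (Q : Matrix n n ℝ) (Φ : Matrix l n ℝ) (σ : ℝ) : Matrix n l ℝ :=
  Q * Φᵀ * (σ • 1 + Φ * Q * Φᵀ)⁻¹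

noncomputable def mismatchedMSE (Sk Sm M : Matrix n n ℝ) (Φ : Matrix l n ℝ) (σ : ℝ) : ℝ :=
  let Wk := wienerFilter Sk Φ σ
  let Wm := wienerFilter Sm Φ σ
  let Sy := σ • (1 : Matrix l l ℝ) + Φ * Sk * Φᵀ
  Sk.trace - 2 * (Wk * Sy * Wmᵀ).trace + (Wm * Sy * Wmᵀ).trace
    + M.trace - 2 * (M * Φᵀ * Wmᵀ).trace + (Wm * Φ * M * Φᵀ * Wmᵀ).trace

theorem wienerFilter_mul_smul_one_add {Q : Matrix n n ℝ} {Φ : Matrix l n ℝ} {σ : ℝ}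
    (h : IsUnit (σ • 1 + Φ * Q * Φᵀ).det) :
    wienerFilter Q Φ σ * (σ • 1 + Φ * Q * Φᵀ) = Q * Φᵀ := by
  rw [wienerFilter, Matrix.mul_assoc, nonsing_inv_mul _ h, Matrix.mul_one]

theorem mismatchedMSE_eq [DecidableEq n] {Sk Sm M : Matrix n n ℝ} {Φ : Matrix l n ℝ} {σ : ℝ}
    (hSk : Skᵀ = Sk) (hM : Mᵀ = M) (h : IsUnit (σ • 1 + Φ * Sk * Φᵀ).det) :
    let R := 1 - wienerFilter Sm Φ σ * Φ
    mismatchedMSE Sk Sm M Φ σ = (R * Sk * Rᵀ).trace + (R * M * Rᵀ).trace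
      + σ * (wienerFilter Sm Φ σ * (wienerFilter Sm Φ σ)ᵀ).trace := by
  intro R
  rw [mismatchedMSE, wienerFilter_mul_smul_one_add h, trace_one_sub_mul_mul_transpose hSk,
    trace_one_sub_mul_mul_transpose hM]
  simp only [Matrix.mul_add, Matrix.add_mul, trace_add, Matrix.mul_smul, Matrix.smul_mul,
    Matrix.mul_one, trace_smul, smul_eq_mul, Matrix.mul_assoc]
  ring

end WienerFilter

section Convergence

variable {n l : Type*} [Fintype n] {S : Matrix n n ℝ} {Φ Y : Matrix l n ℝ}

theorem mul_mul_self_mul_transpose_eq (hS : Sᵀ = S) :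
    Φ * (S * S) * Φᵀ = Φ * S * (Φ * S)ᵀ := by
  rw [transpose_mul, hS]
  simp only [Matrix.mul_assoc]

variable [Fintype l]

theorem posSemidef_mul_mul_self_mul_transpose (hS : Sᵀ = S) :
    (Φ * (S * S) * Φᵀ).PosSemidef := by
  rw [mul_mul_self_mul_transpose_eq hS]
  exact posSemidef_self_mul_conjTranspose (Φ * S)

variable [DecidableEq l]

theorem wienerFilter_mul_self_eq (hY : Yᵀ * (Φ * S) = S) (σ : ℝ) :
    wienerFilter (S * S) Φ σ
      = Yᵀ * (Φ * (S * S) * Φᵀ * (σ • 1 + Φ * (S * S) * Φᵀ)⁻¹) :=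
  calc wienerFilter (S * S) Φ σ
      = Yᵀ * (Φ * S) * S * Φᵀ * (σ • 1 + Φ * (S * S) * Φᵀ)⁻¹ := by rw [hY, wienerFilter]
    _ = _ := by simp only [Matrix.mul_assoc]

theorem smul_wienerFilter_mul_transpose_eq (hS : Sᵀ = S) (hY : Yᵀ * (Φ * S) = S) {σ : ℝ}
    (h : IsUnit (σ • 1 + Φ * (S * S) * Φᵀ).det) :
    σ • (wienerFilter (S * S) Φ σ * (wienerFilter (S * S) Φ σ)ᵀ)
      = Yᵀ * (σ • ((σ • 1 + Φ * (S * S) * Φᵀ)⁻¹ * (Φ * (S * S) * Φᵀ)) ^ 2) * Y := by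
  set H := Φ * (S * S) * Φᵀ
  have hcomm : H * (σ • 1 + H)⁻¹ = (σ • 1 + H)⁻¹ * H := by
    rw [mul_inv_smul_one_add h, inv_smul_one_add_mul h]
  have hHt : Hᵀ = H := (posSemidef_mul_mul_self_mul_transpose hS).transpose_eq
  have hsymm : (H * (σ • 1 + H)⁻¹)ᵀ = H * (σ • 1 + H)⁻¹ := by
    rw [transpose_mul, transpose_nonsing_inv, transpose_add, transpose_smul, transpose_one, hHt,
      hcomm]
  rw [wienerFilter_mul_self_eq hY, transpose_mul, hsymm, transpose_transpose, sq, hcomm]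
  simp only [Matrix.mul_assoc, Matrix.mul_smul, Matrix.smul_mul]

theorem tendsto_smul_wienerFilter_mul_transpose (hS : Sᵀ = S) (hY : Yᵀ * (Φ * S) = S) :
    Tendsto (fun σ => σ • (wienerFilter (S * S) Φ σ * (wienerFilter (S * S) Φ σ)ᵀ))
      (𝓝[>] 0) (𝓝 0) := by
  have hH := posSemidef_mul_mul_self_mul_transpose (Φ := Φ) hS
  refine (tendsto_const_mul_mul_const (hH.tendsto_smul_inv_smul_one_add_mul_pow 2) Yᵀ Y).congr' ?_
  filter_upwards [self_mem_nhdsWithin] with σ hσ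
  exact (smul_wienerFilter_mul_transpose_eq hS hY
    (hH.posDef_smul_one_add hσ).det_pos.ne'.isUnit).symm

variable [DecidableEq n]

theorem one_sub_wienerFilter_mul_mul_eq (hY : Yᵀ * (Φ * S) = S) {Z : Matrix l n ℝ}
    (hZ : Φ * (S * S) * Φᵀ * Z = Φ * S) {σ : ℝ}
    (h : IsUnit (σ • 1 + Φ * (S * S) * Φᵀ).det) :
    (1 - wienerFilter (S * S) Φ σ * Φ) * S
      = Yᵀ * (σ • ((σ • 1 + Φ * (S * S) * Φᵀ)⁻¹ * (Φ * (S * S) * Φᵀ))) * Z := by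
  set H := Φ * (S * S) * Φᵀ
  calc (1 - wienerFilter (S * S) Φ σ * Φ) * S
      = S - Yᵀ * (Φ * S) + Yᵀ * (σ • (σ • 1 + H)⁻¹) * (Φ * S) := by
        rw [wienerFilter_mul_self_eq hY, mul_inv_smul_one_add h]
        simp only [Matrix.sub_mul, Matrix.mul_sub, Matrix.one_mul, Matrix.mul_one,
          Matrix.mul_assoc]
        abel
    _ = Yᵀ * (σ • ((σ • 1 + H)⁻¹ * H)) * Z := by
        rw [hY, sub_self, zero_add, ← hZ]
        simp only [Matrix.mul_assoc, Matrix.smul_mul]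

theorem tendsto_one_sub_wienerFilter_mul_mul (hS : Sᵀ = S) (hY : Yᵀ * (Φ * S) = S) :
    Tendsto (fun σ => (1 - wienerFilter (S * S) Φ σ * Φ) * S) (𝓝[>] 0) (𝓝 0) := by
  have hH := posSemidef_mul_mul_self_mul_transpose (Φ := Φ) hS
  obtain ⟨Z, hZ⟩ := exists_mul_eq_of_range_le
    (by rw [mul_mul_self_mul_transpose_eq hS, range_mulVecLin_self_mul_transpose] :
      LinearMap.range (Φ * S).mulVecLin ≤ LinearMap.range (Φ * (S * S) * Φᵀ).mulVecLin)
  have hlim := hH.tendsto_smul_inv_smul_one_add_mul_pow 1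
  simp only [pow_one] at hlim
  refine (tendsto_const_mul_mul_const hlim Yᵀ Z).congr' ?_
  filter_upwards [self_mem_nhdsWithin] with σ hσ
  exact (one_sub_wienerFilter_mul_mul_eq hY hZ (hH.posDef_smul_one_add hσ).det_pos.ne'.isUnit).symm

theorem tendsto_mismatchedMSE {Sk M K K' : Matrix n n ℝ} (hS : Sᵀ = S)
    (hY : Yᵀ * (Φ * S) = S) (hSk : Sk.PosSemidef) (hK : Sk = S * K * S) (hM : Mᵀ = M)
    (hK' : M = S * K' * S) :
    Tendsto (mismatchedMSE Sk (S * S) M Φ) (𝓝[>] 0) (𝓝 0) := by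
  have hbias K : Tendsto (fun σ => ((1 - wienerFilter (S * S) Φ σ * Φ) * (S * K * S)
      * (1 - wienerFilter (S * S) Φ σ * Φ)ᵀ).trace) (𝓝[>] 0) (𝓝 0) := by
    convert tendsto_trace_mul_mul_transpose (tendsto_one_sub_wienerFilter_mul_mul hS hY) K
      using 3 with σ
    rw [transpose_mul, hS]
    simp only [Matrix.mul_assoc]
  have hnoise := (continuous_id.matrix_trace.tendsto 0).comp
    (tendsto_smul_wienerFilter_mul_transpose hS hY)
  have hsum := ((hbias K).add (hbias K')).add hnoise
  rw [id, trace_zero, add_zero, add_zero] at hsum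
  refine hsum.congr' ?_
  filter_upwards [self_mem_nhdsWithin] with σ hσ
  have hΦSk : (Φ * Sk * Φᵀ).PosSemidef := by
    simpa using hSk.mul_mul_conjTranspose_same Φ
  rw [mismatchedMSE_eq hSk.transpose_eq hM (hΦSk.posDef_smul_one_add hσ).det_pos.ne'.isUnit,
    Function.comp_apply, id, trace_smul, smul_eq_mul, ← hK, ← hK']

end Convergence

/-- mismatched mean-squared error. If range(Σ_k) = range(Σ_m),
μ ∈ range(Σ_m) and rank(Σ_m^{1/2}·Φᵀ·Φ·Σ_m^{1/2}) = rank(Σ_m), then with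
W_c(σ²) = Σ_c·Φᵀ·(σ²·I + Φ·Σ_c·Φᵀ)⁻¹, Σ_y(σ²) = σ²·I + Φ·Σ_k·Φᵀ and M = μ·μᵀ,
MSE_mis(σ²) = tr(Σ_k) − 2·tr(W_k·Σ_y·W_mᵀ) + tr(W_m·Σ_y·W_mᵀ) + tr(M)
− 2·tr(M·Φᵀ·W_mᵀ) + tr(W_m·Φ·M·Φᵀ·W_mᵀ) tends to 0 as σ² → 0⁺. -/
theorem stmt_18 {n l : ℕ} (Sk Sm : Matrix (Fin n) (Fin n) ℝ)
    (hSk : Sk.PosSemidef) (hSm : Sm.PosSemidef)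
    (hrange : LinearMap.range Sk.mulVecLin = LinearMap.range Sm.mulVecLin)
    (μ : Fin n → ℝ) (hμ : μ ∈ LinearMap.range Sm.mulVecLin)
    (Φ : Matrix (Fin l) (Fin n) ℝ)
    (hrank : (hSm.sqrt * Φᵀ * Φ * hSm.sqrt).rank = Sm.rank)
    (Wk Wm : ℝ → Matrix (Fin n) (Fin l) ℝ)
    (hWk : ∀ σ2 : ℝ, Wk σ2 = Sk * Φᵀ * (σ2 • (1 : Matrix (Fin l) (Fin l) ℝ) + Φ * Sk * Φᵀ)⁻¹)
    (hWm : ∀ σ2 : ℝ, Wm σ2 = Sm * Φᵀ * (σ2 • (1 : Matrix (Fin l) (Fin l) ℝ) + Φ * Sm * Φᵀ)⁻¹)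
    (Sy : ℝ → Matrix (Fin l) (Fin l) ℝ)
    (hSy : ∀ σ2 : ℝ, Sy σ2 = σ2 • (1 : Matrix (Fin l) (Fin l) ℝ) + Φ * Sk * Φᵀ)
    (M : Matrix (Fin n) (Fin n) ℝ) (hM : M = Matrix.vecMulVec μ μ)
    (MSEmis : ℝ → ℝ)
    (hMSEmis : ∀ σ2 : ℝ, MSEmis σ2 =
        Sk.trace - 2 * (Wk σ2 * Sy σ2 * (Wm σ2)ᵀ).trace + (Wm σ2 * Sy σ2 * (Wm σ2)ᵀ).trace
          + M.trace - 2 * (M * Φᵀ * (Wm σ2)ᵀ).trace + (Wm σ2 * Φ * M * Φᵀ * (Wm σ2)ᵀ).trace) :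
    Tendsto MSEmis (nhdsWithin 0 (Set.Ioi 0)) (nhds 0) := by
  set S := hSm.sqrt
  have hS : Sᵀ = S := hSm.posSemidef_sqrt.transpose_eq
  have hrangeS : LinearMap.range S.mulVecLin = LinearMap.range Sm.mulVecLin :=
    hSm.range_mulVecLin_sqrt
  obtain ⟨K, hK⟩ := hSk.exists_eq_mul_mul_of_range_le hS (by rw [hrange, hrangeS])
  obtain ⟨w, rfl⟩ : ∃ w, S *ᵥ w = μ := by rwa [← hrangeS] at hμ
  obtain ⟨Y, hY⟩ := exists_transpose_mul_mul_eq_of_rank_eq hS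
    (hrank.trans (by rw [rank, rank, hrangeS]))
  have hMSE : MSEmis = mismatchedMSE Sk (S * S) M Φ := by
    funext σ
    rw [hMSEmis, hWk, hWm, hSy, hSm.sqrt_mul_self]
    rfl
  rw [hMSE]
  refine tendsto_mismatchedMSE (K' := vecMulVec w w) hS hY hSk hK
    (by rw [hM, transpose_vecMulVec]) ?_
  rw [hM, ← mul_vecMulVec_mul_transpose, hS]
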